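/- Perturbative bound on the right noise map (Theorem 2): let G be a finite group, U : G → U(d) a group homomorphism, T : G → superoperators an arbitrary family, and p, t ∈ ℂ with p ≠ 0 and t ≠ 0, so that D_{p,t} is invertible with inverse D_{1/p,1/t}. Suppose the superoperator R satisfies E_{g∈G}[Ad(U g)⁻¹ ∘ R ∘ T(g)] = D_{p,t} ∘ R and E_{g∈G}[Ad(U g) ∘ R ∘ Ad(U g)⁻¹] = D_{p,t}. Let δ = E_{g∈G} ‖T(g) − Ad(U g) ∘ D_{p,t}‖ and assume δ·‖D_{1/p,1/t}‖ < 1. Then for every g ∈ G, ‖T(g) − Ad(U g) ∘ R‖ ≤ ‖T(g) − Ad(U g) ∘ D_{p,t}‖ + ‖E_{h∈G}[Ad(U h)⁻¹ ∘ T(h)] − D_{p,t}‖ / (1 − δ·‖D_{1/p,1/t}‖). -/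

import Mathlib

noncomputable section

namespace RBPaper

abbrev Mat (d : ℕ) := Matrix (Fin d) (Fin d) ℂ

abbrev SuperOp (d : ℕ) := Module.End ℂ (Mat d)

/-- The superoperator `X ↦ U X Uᴴ` for a unitary `U`. -/
def Ad {d : ℕ} (U : Matrix.unitaryGroup (Fin d) ℂ) : SuperOp d :=
  LinearMap.mulLeft ℂ (U : Mat d) ∘ₗ LinearMap.mulRight ℂ (star (U : Mat d))

/-- The superoperator `X ↦ tr(X) • I`. -/
def traceMap (d : ℕ) : SuperOp d :=
  (Matrix.traceLinearMap (Fin d) ℂ ℂ).smulRight (1 : Mat d)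

/-- The depolarizing-type map `D_{p,t} : X ↦ (t/d)·tr(X)·I + p·(X − (tr(X)/d)·I)`. -/
def Dpt (d : ℕ) (p t : ℂ) : SuperOp d :=
  (t / d) • traceMap d + p • (LinearMap.id - (d : ℂ)⁻¹ • traceMap d)

/-- The projection `Π₀ : X ↦ X − (tr(X)/d)·I` onto traceless matrices. -/
def Pi0 (d : ℕ) : SuperOp d := LinearMap.id - (d : ℂ)⁻¹ • traceMap d

/-- Uniform average of a finitely-indexed family in a `ℂ`-module. -/
def expG {G : Type*} [Fintype G] {M : Type*} [AddCommMonoid M] [Module ℂ M]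
    (f : G → M) : M := (Fintype.card G : ℂ)⁻¹ • ∑ g, f g

/-- `(G, U)` is a unitary 2-design: the conjugation action has no nontrivial
invariant subspace of the traceless matrices. -/
def IsTwoDesign {d : ℕ} {G : Type*} [Group G] [Fintype G]
    (U : G →* Matrix.unitaryGroup (Fin d) ℂ) : Prop :=
  ∀ W : Submodule ℂ (Mat d),
    W ≤ LinearMap.ker (Matrix.traceLinearMap (Fin d) ℂ ℂ) →
    (∀ (g : G), ∀ X ∈ W, Ad (U g) X ∈ W) →
    W = ⊥ ∨ W = LinearMap.ker (Matrix.traceLinearMap (Fin d) ℂ ℂ)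


attribute [local instance] Matrix.frobeniusSeminormedAddCommGroup
attribute [local instance] Matrix.frobeniusNormedAddCommGroup
attribute [local instance] Matrix.frobeniusNormedSpace

/-- Operator norm of a superoperator, induced by the Frobenius norm on
matrices. -/
def sNorm {d : ℕ} (L : SuperOp d) : ℝ :=
  @Norm.norm _ ContinuousLinearMap.hasOpNorm (LinearMap.toContinuousLinearMap L)

/-- Uniform average of a real-valued family. -/
def expR {G : Type*} [Fintype G] (f : G → ℝ) : ℝ :=
  (Fintype.card G : ℝ)⁻¹ * ∑ g, f g

open scoped Matrix
variable {d : ℕ}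

lemma Ad_apply (u : Matrix.unitaryGroup (Fin d) ℂ) (X : Mat d) :
    Ad u X = u.1 * (X * star u.1) := rfl

lemma frob_sq (A : Mat d) : ‖A‖ ^ 2 = (Matrix.trace (Aᴴ * A)).re := by
  have h1 : ‖A‖ = (∑ i, ∑ j, ‖A i j‖ ^ (2:ℝ)) ^ (1/2 : ℝ) := Matrix.frobenius_norm_def A
  have hS : (0:ℝ) ≤ ∑ i, ∑ j, ‖A i j‖ ^ (2:ℝ) :=
    Finset.sum_nonneg fun i _ => Finset.sum_nonneg fun j _ => Real.rpow_nonneg (norm_nonneg _) _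
  have h2 : ‖A‖ ^ 2 = ∑ i, ∑ j, ‖A i j‖ ^ (2:ℝ) := by
    rw [h1, ← Real.rpow_natCast (_ ^ (1/2:ℝ)) 2, ← Real.rpow_mul hS]
    norm_num
  rw [h2, Matrix.trace, Complex.re_sum, Finset.sum_comm]
  refine Finset.sum_congr rfl fun i _ => ?_
  rw [Matrix.diag_apply, Matrix.mul_apply, Complex.re_sum]
  refine Finset.sum_congr rfl fun j _ => ?_
  rw [Matrix.conjTranspose_apply]
  have h3 : star (A j i) * A j i = Complex.normSq (A j i) := by
    rw [Complex.star_def, mul_comm, Complex.mul_conj]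
  rw [h3, Complex.ofReal_re, Complex.normSq_eq_norm_sq,
    ← Real.rpow_natCast ‖A j i‖ 2]
  norm_num

lemma norm_Ad (u : Matrix.unitaryGroup (Fin d) ℂ) (X : Mat d) : ‖Ad u X‖ = ‖X‖ := by
  have hsq : ‖Ad u X‖ ^ 2 = ‖X‖ ^ 2 := by
    rw [frob_sq, frob_sq, Ad_apply]
    congr 1
    have hstar : star u.1 = (u.1)ᴴ := rfl
    have h1 : (u.1 * (X * star u.1))ᴴ = u.1 * (Xᴴ * star u.1) := by
      rw [hstar]
      simp [Matrix.conjTranspose_mul, Matrix.mul_assoc]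
    rw [h1]
    have h2 : u.1 * (Xᴴ * star u.1) * (u.1 * (X * star u.1))
        = u.1 * (Xᴴ * X) * star u.1 := by
      have hsm : star u.1 * u.1 = 1 := Matrix.UnitaryGroup.star_mul_self u
      simp only [Matrix.mul_assoc]
      rw [← Matrix.mul_assoc (star u.1) u.1 (X * star u.1), hsm, Matrix.one_mul]
    rw [h2, Matrix.trace_mul_cycle, ← Matrix.mul_assoc,
      Matrix.UnitaryGroup.star_mul_self u, Matrix.one_mul]
  calc ‖Ad u X‖ = Real.sqrt (‖Ad u X‖ ^ 2) := (Real.sqrt_sq (norm_nonneg _)).symm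
    _ = Real.sqrt (‖X‖ ^ 2) := by rw [hsq]
    _ = ‖X‖ := Real.sqrt_sq (norm_nonneg _)

lemma sNorm_nonneg (L : SuperOp d) : 0 ≤ sNorm L := norm_nonneg _

lemma sNorm_apply_le (L : SuperOp d) (x : Mat d) : ‖L x‖ ≤ sNorm L * ‖x‖ :=
  (LinearMap.toContinuousLinearMap L).le_opNorm x

lemma sNorm_le {L : SuperOp d} {c : ℝ} (hc : 0 ≤ c) (h : ∀ x, ‖L x‖ ≤ c * ‖x‖) :
    sNorm L ≤ c := ContinuousLinearMap.opNorm_le_bound _ hc h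

lemma sNorm_mul_le (A B : SuperOp d) : sNorm (A * B) ≤ sNorm A * sNorm B := by
  refine sNorm_le (mul_nonneg (sNorm_nonneg A) (sNorm_nonneg B)) fun x => ?_
  rw [Module.End.mul_apply]
  calc ‖A (B x)‖ ≤ sNorm A * ‖B x‖ := sNorm_apply_le _ _
    _ ≤ sNorm A * (sNorm B * ‖x‖) :=
      mul_le_mul_of_nonneg_left (sNorm_apply_le _ _) (sNorm_nonneg A)
    _ = sNorm A * sNorm B * ‖x‖ := by ring

lemma sNorm_Ad_mul_le (u : Matrix.unitaryGroup (Fin d) ℂ) (L : SuperOp d) :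
    sNorm (Ad u * L) ≤ sNorm L := by
  refine sNorm_le (sNorm_nonneg L) fun x => ?_
  rw [Module.End.mul_apply, norm_Ad]
  exact sNorm_apply_le _ _

lemma sNorm_add_le (A B : SuperOp d) : sNorm (A + B) ≤ sNorm A + sNorm B := by
  refine sNorm_le (add_nonneg (sNorm_nonneg A) (sNorm_nonneg B)) fun x => ?_
  rw [LinearMap.add_apply, add_mul]
  exact le_trans (norm_add_le _ _) (add_le_add (sNorm_apply_le _ _) (sNorm_apply_le _ _))

lemma sNorm_sub_le (A B : SuperOp d) : sNorm (A - B) ≤ sNorm A + sNorm B := by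
  refine sNorm_le (add_nonneg (sNorm_nonneg A) (sNorm_nonneg B)) fun x => ?_
  rw [LinearMap.sub_apply, add_mul]
  exact le_trans (norm_sub_le _ _) (add_le_add (sNorm_apply_le _ _) (sNorm_apply_le _ _))

lemma sNorm_expG_le {G : Type*} [Fintype G] (f : G → SuperOp d) :
    sNorm (expG f) ≤ expR fun g => sNorm (f g) := by
  have hc : (0:ℝ) ≤ (Fintype.card G : ℝ)⁻¹ := by positivity
  refine sNorm_le (mul_nonneg hc (Finset.sum_nonneg fun g _ => sNorm_nonneg _)) fun x => ?_
  have h0 : expG f x = (Fintype.card G : ℂ)⁻¹ • ∑ g, f g x := by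
    rw [expG, LinearMap.smul_apply, LinearMap.sum_apply]
  rw [h0, norm_smul]
  have h1 : ‖((Fintype.card G : ℂ))⁻¹‖ = (Fintype.card G : ℝ)⁻¹ := by
    rw [norm_inv, Complex.norm_natCast]
  rw [h1, expR, mul_assoc, Finset.sum_mul]
  refine mul_le_mul_of_nonneg_left ?_ hc
  exact le_trans (norm_sum_le _ _) (Finset.sum_le_sum fun g _ => sNorm_apply_le _ _)

lemma Ad_one : Ad (1 : Matrix.unitaryGroup (Fin d) ℂ) = 1 :=
  LinearMap.ext fun X => by
    simp [Ad_apply]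

lemma Ad_mul (u v : Matrix.unitaryGroup (Fin d) ℂ) : Ad u * Ad v = Ad (u * v) :=
  LinearMap.ext fun X => by
    simp [Module.End.mul_apply, Ad_apply, star_mul, Matrix.mul_assoc]

lemma traceMap_apply (X : Mat d) : traceMap d X = Matrix.trace X • 1 := rfl

lemma traceMap_mul_Ad (u : Matrix.unitaryGroup (Fin d) ℂ) :
    traceMap d * Ad u = traceMap d :=
  LinearMap.ext fun X => by
    rw [Module.End.mul_apply, traceMap_apply, traceMap_apply, Ad_apply,
      Matrix.trace_mul_comm, Matrix.mul_assoc, Matrix.UnitaryGroup.star_mul_self,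
      Matrix.mul_one]

lemma Ad_mul_traceMap (u : Matrix.unitaryGroup (Fin d) ℂ) :
    Ad u * traceMap d = traceMap d :=
  LinearMap.ext fun X => by
    rw [Module.End.mul_apply, traceMap_apply, map_smul]
    rw [show Ad u 1 = u.1 * (1 * star u.1) from rfl, Matrix.one_mul,
      (u.2.2 : u.1 * star u.1 = 1)]


lemma traceMap_sq : traceMap d * traceMap d = (d : ℂ) • traceMap d :=
  LinearMap.ext fun X => by
    rw [Module.End.mul_apply, LinearMap.smul_apply, traceMap_apply, traceMap_apply,
      Matrix.trace_smul, Matrix.trace_one]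
    simp only [smul_smul, smul_eq_mul, Fintype.card_fin]
    ring_nf

lemma Dpt_eq (p t : ℂ) : Dpt d p t = p • (1 : SuperOp d) + ((t - p) / d) • traceMap d := by
  unfold Dpt
  rw [show (LinearMap.id : SuperOp d) = 1 from rfl]
  match_scalars <;> ring

lemma Dpt_comm_Ad (p t : ℂ) (u : Matrix.unitaryGroup (Fin d) ℂ) :
    Ad u * Dpt d p t = Dpt d p t * Ad u := by
  rw [Dpt_eq, mul_add, add_mul, mul_smul_comm, smul_mul_assoc, mul_one, one_mul,
    mul_smul_comm, smul_mul_assoc, Ad_mul_traceMap, traceMap_mul_Ad]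

lemma Dpt_inv {p t : ℂ} (hd : (d : ℂ) ≠ 0) (hp : p ≠ 0) (ht : t ≠ 0) :
    Dpt d p⁻¹ t⁻¹ * Dpt d p t = 1 := by
  rw [Dpt_eq, Dpt_eq]
  have h1 : (p⁻¹ • (1 : SuperOp d) + ((t⁻¹ - p⁻¹) / d) • traceMap d) *
      (p • (1 : SuperOp d) + ((t - p) / d) • traceMap d) =
      (p⁻¹ * p) • (1 : SuperOp d) +
        (p⁻¹ * ((t - p) / d) + (t⁻¹ - p⁻¹) / d * p +
          (t⁻¹ - p⁻¹) / d * ((t - p) / d) * d) • traceMap d := by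
    simp only [mul_add, add_mul, smul_mul_smul_comm, traceMap_sq, one_mul, mul_one,
      smul_smul]
    match_scalars <;> ring
  rw [h1, inv_mul_cancel₀ hp]
  have h2 : p⁻¹ * ((t - p) / d) + (t⁻¹ - p⁻¹) / d * p + (t⁻¹ - p⁻¹) / d * ((t - p) / d) * d
      = 0 := by field_simp; ring
  rw [h2, zero_smul, add_zero, one_smul]

section GroupAvg
variable {G : Type*} [Fintype G]

lemma expG_add {M : Type*} [AddCommGroup M] [Module ℂ M] (f h : G → M) :
    expG (fun x => f x + h x) = expG f + expG h := by
  unfold expG; rw [Finset.sum_add_distrib, smul_add]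

lemma expG_sub {M : Type*} [AddCommGroup M] [Module ℂ M] (f h : G → M) :
    expG (fun x => f x - h x) = expG f - expG h := by
  unfold expG; rw [Finset.sum_sub_distrib, smul_sub]

lemma expG_const {M : Type*} [AddCommGroup M] [Module ℂ M] [Nonempty G] (m : M) :
    expG (fun _ : G => m) = m := by
  unfold expG
  rw [Finset.sum_const, Finset.card_univ, ← Nat.cast_smul_eq_nsmul ℂ, smul_smul,
    inv_mul_cancel₀ (Nat.cast_ne_zero.mpr Fintype.card_ne_zero), one_smul]

lemma expG_mul_right (f : G → SuperOp d) (A : SuperOp d) :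
    expG f * A = expG fun g => f g * A := by
  unfold expG; rw [smul_mul_assoc, Finset.sum_mul]

lemma expG_mul_left (f : G → SuperOp d) (A : SuperOp d) :
    A * expG f = expG fun g => A * f g := by
  unfold expG; rw [mul_smul_comm, Finset.mul_sum]

lemma expG_inv {M : Type*} [AddCommMonoid M] [Module ℂ M] [Group G] (f : G → M) :
    expG (fun g : G => f g⁻¹) = expG f := by
  unfold expG
  congr 1
  exact Fintype.sum_equiv (Equiv.inv G) _ _ fun g => rfl

lemma expR_nonneg (f : G → ℝ) (h : ∀ g, 0 ≤ f g) : 0 ≤ expR f := by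
  unfold expR
  have : 0 ≤ ∑ g, f g := Finset.sum_nonneg fun g _ => h g
  positivity

lemma expR_le_expR {f h : G → ℝ} (hle : ∀ g, f g ≤ h g) : expR f ≤ expR h := by
  unfold expR
  exact mul_le_mul_of_nonneg_left (Finset.sum_le_sum fun g _ => hle g) (by positivity)

lemma expR_const_mul (f : G → ℝ) (c : ℝ) : expR (fun g => c * f g) = c * expR f := by
  unfold expR; rw [← Finset.mul_sum]; ring

end GroupAvg

set_option maxHeartbeats 2000000 in
/-- Perturbative bound on the right noise map (Theorem 2). -/
theorem right_noise_perturbative_bound {d : ℕ} {G : Type*} [Group G] [Fintype G]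
    (U : G →* Matrix.unitaryGroup (Fin d) ℂ) (T : G → SuperOp d)
    (p t : ℂ) (hp : p ≠ 0) (ht : t ≠ 0)
    (R : SuperOp d)
    (hR : expG (fun g : G => Ad ((U g)⁻¹) ∘ₗ R ∘ₗ T g) = Dpt d p t ∘ₗ R)
    (htwirl : expG (fun g : G => Ad (U g) ∘ₗ R ∘ₗ Ad ((U g)⁻¹)) = Dpt d p t)
    (hsmall :
      expR (fun g : G => sNorm (T g - Ad (U g) ∘ₗ Dpt d p t)) * sNorm (Dpt d p⁻¹ t⁻¹) < 1) :
    ∀ g : G,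
      sNorm (T g - Ad (U g) ∘ₗ R) ≤
        sNorm (T g - Ad (U g) ∘ₗ Dpt d p t) +
          sNorm (expG (fun h : G => Ad ((U h)⁻¹) ∘ₗ T h) - Dpt d p t) /
            (1 - expR (fun g : G => sNorm (T g - Ad (U g) ∘ₗ Dpt d p t)) *
              sNorm (Dpt d p⁻¹ t⁻¹)) := by
  intro g
  by_cases hd0 : d = 0
  · subst hd0
    have hz : ∀ L : SuperOp 0, sNorm L = 0 := by
      intro L
      refine le_antisymm (sNorm_le le_rfl fun x => ?_) (sNorm_nonneg L)
      have hx : L x = 0 := by ext i j; exact i.elim0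
      rw [hx, norm_zero, zero_mul]
    simp only [hz]
    rw [show expR (fun _ : G => (0:ℝ)) = 0 by simp [expR]]
    norm_num
  · have hd : (d : ℂ) ≠ 0 := Nat.cast_ne_zero.mpr hd0
    have hne : Nonempty G := ⟨1⟩
    set D := Dpt d p t with hDdef
    set D' := Dpt d p⁻¹ t⁻¹ with hD'def
    set δ : ℝ := expR (fun g : G => sNorm (T g - Ad (U g) ∘ₗ D)) with hδdef
    set nD' : ℝ := sNorm D' with hnD'def
    set M : ℝ := sNorm (expG (fun h : G => Ad ((U h)⁻¹) ∘ₗ T h) - D) with hMdef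
    have hDD : D' * D = 1 := Dpt_inv hd hp ht
    have hR' : expG (fun g : G => Ad ((U g)⁻¹) * (R * T g)) = D * R := by
      simpa only [Module.End.mul_eq_comp] using hR
    have htwirl' : expG (fun g : G => Ad ((U g)⁻¹) * (R * Ad (U g))) = D := by
      have h1 := expG_inv (fun h : G => Ad (U h) * (R * Ad ((U h)⁻¹)))
      simp only [map_inv, inv_inv] at h1
      rw [h1]
      simpa only [Module.End.mul_eq_comp] using htwirl
    have hkey : D * (R - D) =
        expG (fun g : G => Ad ((U g)⁻¹) * (R * (T g - Ad (U g) * D))) := by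
      have hsplit : (fun g : G => Ad ((U g)⁻¹) * (R * T g)) =
          fun g : G => (Ad ((U g)⁻¹) * (R * Ad (U g))) * D +
            Ad ((U g)⁻¹) * (R * (T g - Ad (U g) * D)) := funext fun x => by
        have e1 : (Ad ((U x)⁻¹) * (R * Ad (U x))) * D =
            Ad ((U x)⁻¹) * (R * (Ad (U x) * D)) := by rw [mul_assoc, mul_assoc]
        rw [e1, mul_sub R, mul_sub (Ad ((U x)⁻¹))]
        abel
      rw [hsplit, expG_add, ← expG_mul_right, htwirl'] at hR'
      rw [mul_sub, ← hR']
      abel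
    have hkey2 : R - D =
        D' * expG (fun g : G => Ad ((U g)⁻¹) * ((R - D) * (T g - Ad (U g) * D))) +
          (expG (fun h : G => Ad ((U h)⁻¹) * T h) - D) := by
      have hsplit2 : (fun g : G => Ad ((U g)⁻¹) * (R * (T g - Ad (U g) * D))) =
          fun g : G => Ad ((U g)⁻¹) * ((R - D) * (T g - Ad (U g) * D)) +
            D * (Ad ((U g)⁻¹) * (T g - Ad (U g) * D)) := funext fun x => by
        have hc : Ad ((U x)⁻¹) * D = D * Ad ((U x)⁻¹) := Dpt_comm_Ad p t _
        have h1 : Ad ((U x)⁻¹) * (D * (T x - Ad (U x) * D)) =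
            D * (Ad ((U x)⁻¹) * (T x - Ad (U x) * D)) := by
          rw [← mul_assoc, hc, mul_assoc]
        calc Ad ((U x)⁻¹) * (R * (T x - Ad (U x) * D))
            = Ad ((U x)⁻¹) * ((R - D) * (T x - Ad (U x) * D)) +
              Ad ((U x)⁻¹) * (D * (T x - Ad (U x) * D)) := by
              rw [sub_mul, mul_sub (Ad ((U x)⁻¹))]
              abel
          _ = _ := by rw [h1]
      have hAvg : expG (fun g : G => Ad ((U g)⁻¹) * (T g - Ad (U g) * D)) =
          expG (fun h : G => Ad ((U h)⁻¹) * T h) - D := by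
        have heq : (fun g : G => Ad ((U g)⁻¹) * (T g - Ad (U g) * D)) =
            fun g : G => Ad ((U g)⁻¹) * T g - D := funext fun x => by
          rw [mul_sub, ← mul_assoc, Ad_mul, inv_mul_cancel, Ad_one, one_mul]
        rw [heq, expG_sub, expG_const]
      rw [hsplit2, expG_add, ← expG_mul_left, hAvg] at hkey
      have h2 := congrArg (fun Z => D' * Z) hkey
      rw [← mul_assoc, hDD, one_mul] at h2
      conv_lhs => rw [h2]
      rw [mul_add, ← mul_assoc, hDD, one_mul]
    have hMeq : sNorm (expG (fun h : G => Ad ((U h)⁻¹) * T h) - D) = M := by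
      rw [hMdef]
      simp only [Module.End.mul_eq_comp]
    have hδeq : expR (fun g : G => sNorm (T g - Ad (U g) * D)) = δ := by
      rw [hδdef]
      simp only [Module.End.mul_eq_comp]
    have hXnorm : sNorm (R - D) ≤ nD' * (sNorm (R - D) * δ) + M := by
      calc sNorm (R - D)
          = sNorm (D' * expG (fun g : G =>
              Ad ((U g)⁻¹) * ((R - D) * (T g - Ad (U g) * D))) +
            (expG (fun h : G => Ad ((U h)⁻¹) * T h) - D)) := congrArg sNorm hkey2
        _ ≤ sNorm (D' * expG (fun g : G =>
              Ad ((U g)⁻¹) * ((R - D) * (T g - Ad (U g) * D)))) +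
            sNorm (expG (fun h : G => Ad ((U h)⁻¹) * T h) - D) := sNorm_add_le _ _
        _ ≤ nD' * sNorm (expG (fun g : G =>
              Ad ((U g)⁻¹) * ((R - D) * (T g - Ad (U g) * D)))) + M := by
            rw [hMeq]
            exact add_le_add_left (sNorm_mul_le _ _) M
        _ ≤ nD' * (sNorm (R - D) * δ) + M := by
            refine add_le_add_left (mul_le_mul_of_nonneg_left ?_ (sNorm_nonneg D')) M
            calc sNorm (expG (fun g : G =>
                  Ad ((U g)⁻¹) * ((R - D) * (T g - Ad (U g) * D))))
                ≤ expR (fun g : G =>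
                    sNorm (Ad ((U g)⁻¹) * ((R - D) * (T g - Ad (U g) * D)))) :=
                  sNorm_expG_le _
              _ ≤ expR (fun g : G => sNorm (R - D) * sNorm (T g - Ad (U g) * D)) := by
                  refine expR_le_expR fun x => ?_
                  exact le_trans (sNorm_Ad_mul_le _ _) (sNorm_mul_le _ _)
              _ = sNorm (R - D) * δ := by rw [expR_const_mul, hδeq]
    have hδ0 : 0 ≤ δ := by
      rw [hδdef]; exact expR_nonneg _ fun x => sNorm_nonneg _
    have hnD'0 : 0 ≤ nD' := sNorm_nonneg _
    have hM0 : 0 ≤ M := by rw [hMdef]; exact sNorm_nonneg _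
    have h1c : 0 < 1 - δ * nD' := by linarith
    have hX : sNorm (R - D) ≤ M / (1 - δ * nD') := by
      rw [le_div_iff₀ h1c]
      nlinarith [hXnorm]
    have hfin : T g - Ad (U g) ∘ₗ R = (T g - Ad (U g) ∘ₗ D) - Ad (U g) * (R - D) := by
      rw [← Module.End.mul_eq_comp, ← Module.End.mul_eq_comp, mul_sub]
      abel
    calc sNorm (T g - Ad (U g) ∘ₗ R)
        = sNorm ((T g - Ad (U g) ∘ₗ D) - Ad (U g) * (R - D)) := by rw [hfin]
      _ ≤ sNorm (T g - Ad (U g) ∘ₗ D) + sNorm (Ad (U g) * (R - D)) := sNorm_sub_le _ _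
      _ ≤ sNorm (T g - Ad (U g) ∘ₗ D) + sNorm (R - D) :=
          add_le_add_right (sNorm_Ad_mul_le _ _) _
      _ ≤ sNorm (T g - Ad (U g) ∘ₗ D) + M / (1 - δ * nD') := add_le_add_right hX _

end RBPaper
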